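/- If A is an n×n totally positive matrix, then for every nonzero x ∈ ℝⁿ, s⁺(Ax) ≤ s⁻(x). -/

import Mathlib

open scoped Classical

def TotallyNonneg {n : ℕ} (A : Matrix (Fin n) (Fin n) ℝ) : Prop :=
  ∀ (k : ℕ) (r c : Fin k → Fin n), StrictMono r → StrictMono c →
    0 ≤ (A.submatrix r c).det

def TotallyPos {n : ℕ} (A : Matrix (Fin n) (Fin n) ℝ) : Prop :=
  ∀ (k : ℕ) (r c : Fin k → Fin n), StrictMono r → StrictMono c →
    0 < (A.submatrix r c).det

noncomputable def countSignChanges : List ℝ → ℕ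
  | a :: b :: t => (if a * b < 0 then 1 else 0) + countSignChanges (b :: t)
  | _ => 0

noncomputable def sMinus {n : ℕ} (y : Fin n → ℝ) : ℕ :=
  countSignChanges ((List.ofFn y).filter (fun x => decide (x ≠ 0)))

noncomputable def sPlus {n : ℕ} (y : Fin n → ℝ) : ℕ :=
  sSup {k | ∃ z : Fin n → ℝ,
    (∀ i, (y i ≠ 0 → z i = y i) ∧ (y i = 0 → z i = 1 ∨ z i = -1)) ∧
    countSignChanges (List.ofFn z) = k}

def MatIrreducible {n : ℕ} (A : Matrix (Fin n) (Fin n) ℝ) : Prop :=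
  ∀ S : Set (Fin n), S.Nonempty → S ≠ Set.univ →
    ∃ i ∈ S, ∃ j ∉ S, A i j ≠ 0

/-!
Split the indices into the `s⁻(x) + 1` maximal consecutive blocks on which the nonzero entries
of `x` have constant sign `σ j = ± (-1) ^ j`. Then `A x = C σ`, where column `j` of `C = A W`
is `A` applied to `|x|` restricted to block `j`; expanding the minors of `C` multilinearly in
its columns shows that all maximal minors of `C` are positive.

For any `C` of size `n × (m + 1)` with positive maximal minors and `σ ≠ 0`, `s⁺(C σ) ≤ m`: otherwise
some rows `r₀ < ⋯ < r_{m+1}` carry weakly alternating values of `y = C σ`. The matrix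
`[y_r | C_r]` is singular, and its Laplace expansion along the first column is a sum of terms
of one sign, so all of them vanish; hence `y` vanishes on `m + 1` of these rows, contradicting
the invertibility of the corresponding minor of `C`.
-/

namespace Matrix

theorem det_mul_eq_sum_prod_mul_det_submatrix {R : Type*} [CommRing R] {m n : ℕ}
    (M : Matrix (Fin m) (Fin n) R) (W : Matrix (Fin n) (Fin m) R) :
    (M * W).det = ∑ p : Fin m → Fin n, (∏ j, W (p j) j) * (M.submatrix id p).det := by
  have hrows : Wᵀ * Mᵀ = of fun j => ∑ i, W i j • Mᵀ i := by
    ext j t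
    simp [mul_apply, Finset.sum_apply, mul_comm]
  have hexpand := (detRowAlternating : (Fin m → R) [⋀^Fin m]→ₗ[R] R).toMultilinearMap.map_sum
    fun j i => W i j • Mᵀ i
  rw [← det_transpose, transpose_mul, hrows]
  refine hexpand.trans (Finset.sum_congr rfl fun p _ => ?_)
  rw [MultilinearMap.map_smul_univ, smul_eq_mul, ← det_transpose (M.submatrix id p)]
  rfl

/-- Laplace expansion along the first column of the singular matrix `[C *ᵥ σ | C]`. -/
theorem sum_neg_one_pow_mul_mulVec_mul_det_submatrix_succAbove {R : Type*} [CommRing R] [IsDomain R]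
    {m : ℕ} (C : Matrix (Fin (m + 1)) (Fin m) R) (σ : Fin m → R) :
    ∑ t : Fin (m + 1), (-1) ^ (t : ℕ) * (C *ᵥ σ) t * (C.submatrix t.succAbove id).det = 0 := by
  set B : Matrix (Fin (m + 1)) (Fin (m + 1)) R := of fun t => Fin.cons ((C *ᵥ σ) t) (C t)
  have hB : B.det = 0 := by
    refine exists_mulVec_eq_zero_iff.mp ⟨Fin.cons (-1) σ, fun h => by simpa using congrFun h 0, ?_⟩
    ext t
    simp [B, mulVec, dotProduct, Fin.sum_univ_succ]
  rw [← hB, det_succ_column_zero]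
  rfl

end Matrix

open Matrix

def blockWeights {n m : ℕ} (g : Fin n → Fin m) (w : Fin n → ℝ) : Matrix (Fin n) (Fin m) ℝ :=
  of fun i j => if g i = j then w i else 0

theorem blockWeights_mulVec {n m : ℕ} (g : Fin n → Fin m) (w : Fin n → ℝ) (σ : Fin m → ℝ)
    (i : Fin n) : (blockWeights g w *ᵥ σ) i = w i * σ (g i) := by
  simp [blockWeights, mulVec, dotProduct, ite_mul]

theorem det_mul_blockWeights_pos {n m : ℕ} {M : Matrix (Fin m) (Fin n) ℝ}
    (hM : ∀ p : Fin m → Fin n, StrictMono p → 0 < (M.submatrix id p).det)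
    {g : Fin n → Fin m} (hg : Monotone g) {w : Fin n → ℝ} (hw : 0 ≤ w)
    (hblocks : ∀ j, ∃ i, g i = j ∧ 0 < w i) :
    0 < (M * blockWeights g w).det := by
  have hstrictMono {p : Fin m → Fin n} (hp : ∀ j, g (p j) = j) : StrictMono p :=
    fun s t hst => hg.reflect_lt (by rwa [hp s, hp t])
  rw [det_mul_eq_sum_prod_mul_det_submatrix]
  refine Finset.sum_pos' (fun p _ => ?_) ?_
  · by_cases hp : ∀ j, g (p j) = j
    · refine mul_nonneg (Finset.prod_nonneg fun j _ => ?_) (hM p (hstrictMono hp)).le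
      simpa [blockWeights, hp j] using hw (p j)
    · obtain ⟨j, hj⟩ := not_forall.mp hp
      rw [Finset.prod_eq_zero (Finset.mem_univ j) (by simp [blockWeights, hj]), zero_mul]
  · choose p hp hpos using hblocks
    refine ⟨p, Finset.mem_univ p, mul_pos (Finset.prod_pos fun j _ => ?_) (hM p (hstrictMono hp))⟩
    simpa [blockWeights, hp j] using hpos j

noncomputable def nonzeroEntries {n : ℕ} (x : Fin n → ℝ) : List ℝ :=
  (List.ofFn x).filter (fun a => decide (a ≠ 0))

theorem sMinus_eq_countSignChanges_nonzeroEntries {n : ℕ} (x : Fin n → ℝ) :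
    sMinus x = countSignChanges (nonzeroEntries x) := rfl

theorem nonzeroEntries_cons_zero {n : ℕ} (x : Fin n → ℝ) :
    nonzeroEntries (Fin.cons 0 x : Fin (n + 1) → ℝ) = nonzeroEntries x := by
  simp [nonzeroEntries, List.ofFn_succ]

theorem nonzeroEntries_cons_of_ne_zero {n : ℕ} {a : ℝ} (ha : a ≠ 0) (x : Fin n → ℝ) :
    nonzeroEntries (Fin.cons a x : Fin (n + 1) → ℝ) = a :: nonzeroEntries x := by
  simp [nonzeroEntries, List.ofFn_succ, ha]

theorem nonzeroEntries_eq_nil_iff {n : ℕ} {x : Fin n → ℝ} : nonzeroEntries x = [] ↔ x = 0 := by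
  simp [nonzeroEntries, List.filter_eq_nil_iff, funext_iff]

theorem headI_nonzeroEntries_ne_zero {n : ℕ} {x : Fin n → ℝ} (hx : x ≠ 0) :
    (nonzeroEntries x).headI ≠ 0 := by
  obtain ⟨b, l, hbl⟩ := List.exists_cons_of_ne_nil (mt nonzeroEntries_eq_nil_iff.mp hx)
  have hb : b ∈ nonzeroEntries x := hbl ▸ List.mem_cons_self
  rw [hbl]
  simpa using (List.mem_filter.mp hb).2

theorem nonzeroEntries_eq_of_forall_ne_zero {n : ℕ} {x : Fin n → ℝ} (hx : ∀ i, x i ≠ 0) :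
    nonzeroEntries x = List.ofFn x :=
  List.filter_eq_self.mpr (by simpa [List.mem_ofFn] using hx)

theorem sMinus_cons_of_ne_zero {n : ℕ} {a : ℝ} (ha : a ≠ 0) {x : Fin n → ℝ} (hx : x ≠ 0) :
    sMinus (Fin.cons a x : Fin (n + 1) → ℝ) =
      (if a * (nonzeroEntries x).headI < 0 then 1 else 0) + sMinus x := by
  obtain ⟨b, l, hbl⟩ := List.exists_cons_of_ne_nil (mt nonzeroEntries_eq_nil_iff.mp hx)
  rw [sMinus_eq_countSignChanges_nonzeroEntries, sMinus_eq_countSignChanges_nonzeroEntries,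
    nonzeroEntries_cons_of_ne_zero ha, hbl]
  rfl

theorem nonneg_mul_of_nonneg_mul_of_mul_pos {K : Type*} [Field K] [LinearOrder K]
    [IsStrictOrderedRing K] {u a b : K} (hu : 0 ≤ u * b) (hab : 0 < a * b) :
    0 ≤ u * a := by
  have hb : 0 < b * b := mul_self_pos.mpr (by rintro rfl; simp at hab)
  nlinarith

/-- `g i` is the label of the sign block containing `i`: the nonzero entries of block `j` have
the sign of `(-1) ^ j` times that of the first nonzero entry of `x`. -/
structure SignBlocks {n : ℕ} (x : Fin n → ℝ) (g : Fin n → ℕ) : Prop where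
  monotone : Monotone g
  le_sMinus : ∀ i, g i ≤ sMinus x
  exists_ne_zero : ∀ j ≤ sMinus x, ∃ i, g i = j ∧ x i ≠ 0
  sign_nonneg : ∀ i, 0 ≤ (-1) ^ g i * x i * (nonzeroEntries x).headI

theorem monotone_cons_zero {n : ℕ} {g : Fin n → ℕ} (hg : Monotone g) :
    Monotone (Fin.cons 0 g : Fin (n + 1) → ℕ) := by
  intro i j hij
  cases i using Fin.cases with
  | zero => exact Nat.zero_le _
  | succ i =>
    cases j using Fin.cases with
    | zero => exact absurd hij (by simp)
    | succ j => exact hg (Fin.succ_le_succ_iff.mp hij)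

theorem signBlocks_cons_zero_tail {n : ℕ} {a : ℝ} (ha : a ≠ 0) :
    SignBlocks (Fin.cons a 0 : Fin (n + 1) → ℝ) 0 := by
  have hs : sMinus (Fin.cons a 0 : Fin (n + 1) → ℝ) = 0 := by
    rw [sMinus_eq_countSignChanges_nonzeroEntries, nonzeroEntries_cons_of_ne_zero ha,
      nonzeroEntries_eq_nil_iff.mpr rfl]
    rfl
  refine ⟨monotone_const, fun _ => Nat.zero_le _, fun j hj => ⟨0, by simp_all⟩, fun i => ?_⟩
  rw [nonzeroEntries_cons_of_ne_zero ha]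
  cases i using Fin.cases <;> simp [mul_self_nonneg]

namespace SignBlocks

variable {n : ℕ} {x : Fin n → ℝ} {g : Fin n → ℕ}

theorem cons_zero (h : SignBlocks x g) :
    SignBlocks (Fin.cons 0 x : Fin (n + 1) → ℝ) (Fin.cons 0 g) := by
  have hs : sMinus (Fin.cons 0 x : Fin (n + 1) → ℝ) = sMinus x := by
    rw [sMinus_eq_countSignChanges_nonzeroEntries, nonzeroEntries_cons_zero]; rfl
  refine ⟨monotone_cons_zero h.monotone, fun i => ?_, fun j hj => ?_, fun i => ?_⟩
  · cases i using Fin.cases <;> simp [h.le_sMinus, hs]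
  · obtain ⟨i, hi, hxi⟩ := h.exists_ne_zero j (hs ▸ hj)
    exact ⟨i.succ, by simpa using hi, by simpa using hxi⟩
  · rw [nonzeroEntries_cons_zero]
    cases i using Fin.cases <;> simp [h.sign_nonneg]

theorem cons_of_pos {a : ℝ} (h : SignBlocks x g) (hx : x ≠ 0)
    (ha : 0 < a * (nonzeroEntries x).headI) :
    SignBlocks (Fin.cons a x : Fin (n + 1) → ℝ) (Fin.cons 0 g) := by
  have ha0 : a ≠ 0 := by rintro rfl; simp at ha
  have hs : sMinus (Fin.cons a x : Fin (n + 1) → ℝ) = sMinus x := by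
    rw [sMinus_cons_of_ne_zero ha0 hx, if_neg ha.not_gt, zero_add]
  refine ⟨monotone_cons_zero h.monotone, fun i => ?_, fun j hj => ?_, fun i => ?_⟩
  · cases i using Fin.cases <;> simp [h.le_sMinus, hs]
  · obtain ⟨i, hi, hxi⟩ := h.exists_ne_zero j (hs ▸ hj)
    exact ⟨i.succ, by simpa using hi, by simpa using hxi⟩
  · rw [nonzeroEntries_cons_of_ne_zero ha0]
    cases i using Fin.cases with
    | zero => simp [mul_self_nonneg]
    | succ i =>
      simpa using nonneg_mul_of_nonneg_mul_of_mul_pos (h.sign_nonneg i) ha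

theorem cons_of_neg {a : ℝ} (h : SignBlocks x g) (hx : x ≠ 0)
    (ha : a * (nonzeroEntries x).headI < 0) :
    SignBlocks (Fin.cons a x : Fin (n + 1) → ℝ) (Fin.cons 0 (g + 1)) := by
  have ha0 : a ≠ 0 := by rintro rfl; simp at ha
  have hs : sMinus (Fin.cons a x : Fin (n + 1) → ℝ) = sMinus x + 1 := by
    rw [sMinus_cons_of_ne_zero ha0 hx, if_pos ha, add_comm]
  refine ⟨monotone_cons_zero (h.monotone.add_const 1), fun i => ?_, fun j hj => ?_, fun i => ?_⟩
  · cases i using Fin.cases <;> simp [h.le_sMinus, hs]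
  · cases j with
    | zero => exact ⟨0, rfl, by simpa using ha0⟩
    | succ j =>
      obtain ⟨i, hi, hxi⟩ := h.exists_ne_zero j (by omega)
      exact ⟨i.succ, by simpa using hi, by simpa using hxi⟩
  · rw [nonzeroEntries_cons_of_ne_zero ha0]
    cases i using Fin.cases with
    | zero => simp [mul_self_nonneg]
    | succ i =>
      have := nonneg_mul_of_nonneg_mul_of_mul_pos (h.sign_nonneg i) (a := -a) (by linarith)
      simp only [Fin.cons_succ, List.headI_cons, Pi.add_apply, Pi.one_apply, pow_succ]
      linarith

end SignBlocks

theorem exists_signBlocks {n : ℕ} (x : Fin n → ℝ) (hx : x ≠ 0) : ∃ g, SignBlocks x g := by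
  induction n with
  | zero => exact absurd (Subsingleton.elim x 0) hx
  | succ n ih =>
    obtain ⟨a, y, rfl⟩ : ∃ (a : ℝ) (y : Fin n → ℝ), Fin.cons a y = x := ⟨_, _, Fin.cons_self_tail x⟩
    by_cases hy : y = 0
    · subst hy
      have ha : a ≠ 0 := by rintro rfl; exact hx Matrix.cons_zero_zero
      exact ⟨0, signBlocks_cons_zero_tail ha⟩
    obtain ⟨g, hg⟩ := ih y hy
    rcases lt_trichotomy (a * (nonzeroEntries y).headI) 0 with hneg | hzero | hpos
    · exact ⟨_, hg.cons_of_neg hy hneg⟩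
    · obtain rfl : a = 0 :=
        (mul_eq_zero.mp hzero).resolve_right (headI_nonzeroEntries_ne_zero hy)
      exact ⟨_, hg.cons_zero⟩
    · exact ⟨_, hg.cons_of_pos hy hpos⟩

theorem countSignChanges_le_length : ∀ l : List ℝ, countSignChanges l ≤ l.length
  | [] | [_] => Nat.zero_le _
  | a :: b :: t => by
    have := countSignChanges_le_length (b :: t)
    simp only [countSignChanges, List.length_cons] at this ⊢
    split <;> omega

theorem exists_completion_countSignChanges_eq_sPlus {n : ℕ} (y : Fin n → ℝ) :
    ∃ z : Fin n → ℝ, (∀ i, z i ≠ 0) ∧ (∀ i, y i ≠ 0 → z i = y i) ∧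
      countSignChanges (List.ofFn z) = sPlus y := by
  have hne : {k | ∃ z : Fin n → ℝ,
      (∀ i, (y i ≠ 0 → z i = y i) ∧ (y i = 0 → z i = 1 ∨ z i = -1)) ∧
      countSignChanges (List.ofFn z) = k}.Nonempty :=
    ⟨_, fun i => if y i = 0 then 1 else y i,
      fun i => ⟨fun h => if_neg h, fun h => Or.inl (if_pos h)⟩, rfl⟩
  have hbdd : BddAbove {k | ∃ z : Fin n → ℝ,
      (∀ i, (y i ≠ 0 → z i = y i) ∧ (y i = 0 → z i = 1 ∨ z i = -1)) ∧
      countSignChanges (List.ofFn z) = k} := by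
    refine ⟨n, ?_⟩
    rintro _ ⟨z, -, rfl⟩
    simpa using countSignChanges_le_length (List.ofFn z)
  obtain ⟨z, hz, hzk⟩ := Nat.sSup_mem hne hbdd
  refine ⟨z, fun i hzi => ?_, fun i hyi => (hz i).1 hyi, hzk⟩
  by_cases hyi : y i = 0
  · rcases (hz i).2 hyi with h | h <;> simp [h] at hzi
  · exact hyi ((hz i).1 hyi ▸ hzi)

theorem exists_strictMono_sign_alternating_of_lt_sPlus {n m : ℕ} {y : Fin n → ℝ}
    (h : m < sPlus y) :
    ∃ r : Fin (m + 2) → Fin n, StrictMono r ∧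
      ∃ c ≠ 0, ∀ t : Fin (m + 2), 0 ≤ (-1) ^ (t : ℕ) * y (r t) * c := by
  obtain ⟨z, hz0, hzy, hz⟩ := exists_completion_countSignChanges_eq_sPlus y
  have hsMinus : sMinus z = sPlus y := by
    rw [sMinus_eq_countSignChanges_nonzeroEntries, nonzeroEntries_eq_of_forall_ne_zero hz0, hz]
  have hz_ne : z ≠ 0 := by
    rcases n with _ | n
    · simp [countSignChanges] at hz
      omega
    · exact fun h => hz0 0 (congrFun h 0)
  obtain ⟨g, hg⟩ := exists_signBlocks z hz_ne
  choose r hr using fun t : Fin (m + 2) => (hg.exists_ne_zero t (by omega)).imp fun _ => And.left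
  refine ⟨r, fun s t hst => hg.monotone.reflect_lt (by rwa [hr, hr]), _,
    headI_nonzeroEntries_ne_zero hz_ne, fun t => ?_⟩
  by_cases hyt : y (r t) = 0
  · simp [hyt]
  · rw [← hzy _ hyt, ← hr t]
    exact hg.sign_nonneg (r t)

theorem sPlus_mulVec_le {n m : ℕ} (C : Matrix (Fin n) (Fin (m + 1)) ℝ)
    (hC : ∀ ρ : Fin (m + 1) → Fin n, StrictMono ρ → 0 < (C.submatrix ρ id).det)
    {σ : Fin (m + 1) → ℝ} (hσ : σ ≠ 0) : sPlus (C *ᵥ σ) ≤ m := by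
  by_contra! h
  obtain ⟨r, hr, c, hc, hsign⟩ := exists_strictMono_sign_alternating_of_lt_sPlus h
  have hminor (t : Fin (m + 2)) : 0 < (C.submatrix (r ∘ t.succAbove) id).det :=
    hC _ (hr.comp (Fin.strictMono_succAbove t))
  have hrow (t : Fin (m + 2)) : (C.submatrix r id *ᵥ σ) t = (C *ᵥ σ) (r t) := rfl
  have hzero (t : Fin (m + 2)) : (C *ᵥ σ) (r t) = 0 := by
    have hsum := congrArg (· * c)
      (sum_neg_one_pow_mul_mulVec_mul_det_submatrix_succAbove (C.submatrix r id) σ)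
    simp only [Finset.sum_mul, zero_mul] at hsum
    have hterm := (Finset.sum_eq_zero_iff_of_nonneg fun s _ => ?_).mp hsum t (Finset.mem_univ t)
    · simpa [hc, (hminor t).ne', hrow] using hterm
    · rw [submatrix_submatrix, Function.comp_id, hrow]
      linarith [mul_nonneg (hsign s) (hminor s).le]
  have hkernel : (C.submatrix (r ∘ Fin.castSucc) id) *ᵥ σ = 0 := funext fun t => hzero _
  exact (hC _ (hr.comp Fin.strictMono_castSucc)).ne' (exists_mulVec_eq_zero_iff.mp ⟨σ, hσ, hkernel⟩)

theorem tp_strong_svdp {n : ℕ} (A : Matrix (Fin n) (Fin n) ℝ)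
    (hA : TotallyPos A) :
    ∀ x : Fin n → ℝ, x ≠ 0 → sPlus (A.mulVec x) ≤ sMinus x := by
  intro x hx
  obtain ⟨g, hg⟩ := exists_signBlocks x hx
  set c := (nonzeroEntries x).headI
  have hc : c ≠ 0 := headI_nonzeroEntries_ne_zero hx
  let G : Fin n → Fin (sMinus x + 1) := fun i => ⟨g i, Nat.lt_succ_of_le (hg.le_sMinus i)⟩
  let w : Fin n → ℝ := fun i => (-1) ^ g i * x i * c
  let σ : Fin (sMinus x + 1) → ℝ := fun j => (-1) ^ (j : ℕ) / c
  have hAx : A *ᵥ x = (A * blockWeights G w) *ᵥ σ := by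
    rw [← mulVec_mulVec]
    congr 1
    ext i
    rw [blockWeights_mulVec]
    simp only [w, σ, G]
    field_simp
    rw [← pow_mul, Even.neg_one_pow ⟨g i, by ring⟩, mul_one]
  have hσ : σ ≠ 0 := fun h => by simpa [σ, hc] using congrFun h 0
  rw [hAx]
  refine sPlus_mulVec_le _ (fun ρ hρ => det_mul_blockWeights_pos (fun p hp => hA _ ρ p hρ hp)
    (fun i j hij => hg.monotone hij) hg.sign_nonneg fun j => ?_) hσ
  obtain ⟨i, hi, hxi⟩ := hg.exists_ne_zero j (Nat.lt_succ_iff.mp j.isLt)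
  refine ⟨i, Fin.ext hi, (hg.sign_nonneg i).lt_of_ne
    (mul_ne_zero (mul_ne_zero (pow_ne_zero _ (neg_ne_zero.mpr one_ne_zero)) hxi) hc).symm⟩
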